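/- For every δ > 0 there exist constants C(δ) > 0 and R(δ) > 0 such that for all complex numbers z₁, z₂ satisfying |Im z_i| ≥ δ and |Re z_i| ≥ |Im z_i| for i = 1,2, and for every integer N ≥ δ^{−2}, one has | N^{−1}·K̃_N( z₁, z₂, 1/N ) | ≤ C(δ)·(N−1)!·R(δ)^{2N}·|Im z₁|^N·|Im z₂|^N. -/

import Mathlib

open Real

noncomputable section

/-- The monic (probabilists') Hermite polynomial, evaluated at a complex number. -/
def hermiteH (k : ℕ) (z : ℂ) : ℂ := Polynomial.aeval z (Polynomial.hermite k)

/-- The normalized Hermite polynomial `p_k = H_k / ((2π)^{1/4} (k!)^{1/2})`. -/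
def hermiteP (k : ℕ) (z : ℂ) : ℂ :=
  hermiteH k z / (((2 * π) ^ ((1:ℝ)/4) * Real.sqrt (Nat.factorial k) : ℝ) : ℂ)

/-- The Hermite function `φ_k(z) = p_k(z) exp(−z²/4)`. -/
def hermitePhi (k : ℕ) (z : ℂ) : ℂ := hermiteP k z * Complex.exp (-(z ^ 2) / 4)

/-- The Hermite reproducing kernel `K_N(z₁,z₂) = Σ_{k<N} φ_k(z₁) φ_k(z₂)`. -/
def kernelK (N : ℕ) (z₁ z₂ : ℂ) : ℂ :=
  ∑ k ∈ Finset.range N, hermitePhi k z₁ * hermitePhi k z₂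

/-- The rescaled kernel `K̃_N(z₁,z₂,s) = s^{−1/2} K_N(z₁ s^{−1/2}, z₂ s^{−1/2})`
(principal powers). -/
def kernelKt (N : ℕ) (z₁ z₂ s : ℂ) : ℂ :=
  s ^ (-(1:ℂ)/2) * kernelK N (z₁ * s ^ (-(1:ℂ)/2)) (z₂ * s ^ (-(1:ℂ)/2))

/-- `d(H) = √(1+iH)`, the principal square root. -/
def dC (H : ℝ) : ℂ := (1 + H * Complex.I) ^ ((1:ℂ)/2)

/-- The closed strip `S̄_{α,β} = {z : |Re z| ≤ 2−α, |Im z| ≤ β}`. -/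
def Sbar (α β : ℝ) : Set ℂ := {z : ℂ | |z.re| ≤ 2 - α ∧ |z.im| ≤ β}

/-- The Wigner semicircle density. -/
def wigner (x : ℝ) : ℝ := (2 * π)⁻¹ * Real.sqrt (4 - x ^ 2)

/-- The analytic continuation of the Wigner density,
`w(z) = (2π)⁻¹ (2−z)^{1/2} (2+z)^{1/2}` (principal powers). -/
def wignerC (z : ℂ) : ℂ :=
  (((2 * π)⁻¹ : ℝ) : ℂ) * ((2 - z) ^ ((1:ℂ)/2) * (2 + z) ^ ((1:ℂ)/2))

open scoped Nat in
lemma fact_two_mul' (m : ℕ) : (2*m).factorial = 2^m * m.factorial * (2*m-1)‼ := by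
  cases m with
  | zero => rfl
  | succ m =>
    have h1 : 2*(m+1) = (2*m+1)+1 := by ring
    rw [h1, Nat.factorial_eq_mul_doubleFactorial]
    have h2 : (2*m+1)+1 = 2*(m+1) := by ring
    rw [h2, Nat.doubleFactorial_two_mul]
    have h3 : 2*(m+1)-1 = 2*m+1 := by omega
    rw [h3]

open scoped Nat in
lemma coeff_term_bound (n k : ℕ) (hk : k < n + 1) (r : ℝ) (hr : 0 ≤ r) {ρ : ℝ} (hρ : 0 < ρ) :
    |(((Polynomial.hermite n).coeff k : ℤ) : ℝ)| * r ^ k ≤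
      (n.factorial * ρ⁻¹ ^ n * Real.exp (ρ ^ 2 / 2)) * ((ρ * r) ^ k / k.factorial) := by
  have hkn : k ≤ n := Nat.lt_succ_iff.mp hk
  rw [Polynomial.coeff_hermite]
  split_ifs with h
  · have hnk : Even (n - k) := by
      rw [Nat.even_sub hkn]; rw [Nat.even_add] at h; exact h
    obtain ⟨m, hm⟩ := hnk
    have hn : n = 2*m + k := by omega
    subst hn
    have hD : (2*m + k) - k - 1 = 2*m - 1 := by omega
    rw [hD]
    have habs : |((((-1:ℤ)) ^ ((2*m + k - k)/2) * (2*m-1)‼ * Nat.choose (2*m+k) k : ℤ) : ℝ)| =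
        ((2*m-1)‼ * Nat.choose (2*m+k) k : ℝ) := by
      push_cast
      rw [abs_mul, abs_mul, abs_pow, abs_neg, abs_one, one_pow, one_mul,
        abs_of_nonneg (by positivity), abs_of_nonneg (by positivity)]
    rw [habs]
    have key : (ρ ^ 2 / 2) ^ m / m.factorial ≤ Real.exp (ρ ^ 2 / 2) :=
      Real.pow_div_factorial_le_exp _ (by positivity) m
    have hρ2m : (ρ ^ 2 / 2) ^ m = ρ ^ (2*m) / 2 ^ m := by
      rw [div_pow, pow_mul]
    have key2 : ρ ^ (2*m) ≤ 2 ^ m * m.factorial * Real.exp (ρ ^ 2 / 2) := by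
      rw [hρ2m, div_div] at key
      calc ρ ^ (2*m) = (ρ ^ (2*m) / (2^m * m.factorial)) * (2^m * m.factorial) := by
            field_simp
        _ ≤ Real.exp (ρ^2/2) * (2^m * m.factorial) := by gcongr
        _ = 2 ^ m * m.factorial * Real.exp (ρ ^ 2 / 2) := by ring
    have hfactN : (2*m+k).factorial = Nat.choose (2*m+k) k * k.factorial * (2*m).factorial := by
      rw [← Nat.choose_mul_factorial_mul_factorial (show k ≤ 2*m+k by omega),
        Nat.add_sub_cancel]
    have hfact : ((2*m+k).factorial : ℝ) =
        (Nat.choose (2*m+k) k : ℝ) * k.factorial * (2^m * m.factorial * (2*m-1)‼) := by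
      rw [hfactN, fact_two_mul']
      push_cast
      ring
    have hone : 1 ≤ 2^m * (m.factorial:ℝ) * Real.exp (ρ^2/2) * ρ⁻¹^(2*m) := by
      rw [inv_pow, ← div_eq_mul_inv, le_div_iff₀ (by positivity), one_mul]
      exact key2
    calc ((2*m-1)‼ * Nat.choose (2*m+k) k : ℝ) * r ^ k
        = ((Nat.choose (2*m+k) k : ℝ) * (2*m-1)‼ * r^k) * 1 := by ring
      _ ≤ ((Nat.choose (2*m+k) k : ℝ) * (2*m-1)‼ * r^k) *
            (2^m * (m.factorial:ℝ) * Real.exp (ρ^2/2) * ρ⁻¹^(2*m)) := by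
          apply mul_le_mul_of_nonneg_left hone (by positivity)
      _ = ((2*m+k).factorial * ρ⁻¹ ^ (2*m+k) * Real.exp (ρ ^ 2 / 2)) *
            ((ρ * r) ^ k / k.factorial) := by
          rw [hfact]
          field_simp
          have hρk : ρ ^ k * ρ⁻¹ ^ k = 1 := by rw [← mul_pow, mul_inv_cancel₀ hρ.ne', one_pow]
          linear_combination (-((Nat.choose (2*m+k) k : ℝ) * r^k * ρ⁻¹^(2*m))) * hρk
  · simp only [Int.cast_zero, abs_zero, zero_mul]
    positivity

lemma abs_hermiteH_le (n : ℕ) (w : ℂ) {ρ : ℝ} (hρ : 0 < ρ) :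
    ‖hermiteH n w‖ ≤
      n.factorial * ρ⁻¹ ^ n * Real.exp (ρ ^ 2 / 2) * Real.exp (ρ * ‖w‖) := by
  have hrep : hermiteH n w =
      ∑ i ∈ Finset.range (n+1), ((Polynomial.hermite n).coeff i : ℂ) * w ^ i := by
    rw [hermiteH, Polynomial.aeval_eq_sum_range, Polynomial.natDegree_hermite]
    simp [zsmul_eq_mul]
  rw [hrep]
  calc ‖∑ i ∈ Finset.range (n+1), ((Polynomial.hermite n).coeff i : ℂ) * w ^ i‖
      ≤ ∑ i ∈ Finset.range (n+1), ‖((Polynomial.hermite n).coeff i : ℂ) * w ^ i‖ :=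
        norm_sum_le _ _
    _ ≤ ∑ i ∈ Finset.range (n+1),
          (n.factorial * ρ⁻¹ ^ n * Real.exp (ρ ^ 2 / 2)) *
            ((ρ * ‖w‖) ^ i / i.factorial) := by
        apply Finset.sum_le_sum
        intro i hi
        rw [norm_mul, norm_pow, Complex.norm_intCast]
        exact coeff_term_bound n i (Finset.mem_range.mp hi) _ (norm_nonneg w) hρ
    _ = (n.factorial * ρ⁻¹ ^ n * Real.exp (ρ ^ 2 / 2)) *
          ∑ i ∈ Finset.range (n+1), (ρ * ‖w‖) ^ i / i.factorial := by
        rw [Finset.mul_sum]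
    _ ≤ n.factorial * ρ⁻¹ ^ n * Real.exp (ρ ^ 2 / 2) * Real.exp (ρ * ‖w‖) := by
        apply mul_le_mul_of_nonneg_left (Real.sum_le_exp_of_nonneg (by positivity) _)
        positivity

lemma abs_hermitePhi_le (k : ℕ) (w : ℂ) {ρ : ℝ} (hρ : 0 < ρ) :
    ‖hermitePhi k w‖ ≤
      Real.sqrt k.factorial * ρ⁻¹ ^ k *
        (Real.exp (ρ ^ 2 / 2) * Real.exp (ρ * ‖w‖) * Real.exp (-(w ^ 2).re / 4)) := by
  have hsq : (0:ℝ) < Real.sqrt k.factorial := Real.sqrt_pos.mpr (by positivity)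
  have hc : (1:ℝ) ≤ (2 * π) ^ ((1:ℝ)/4) :=
    Real.one_le_rpow (by nlinarith [Real.pi_gt_three]) (by norm_num)
  have hexp : ‖Complex.exp (-(w ^ 2) / 4)‖ = Real.exp (-(w ^ 2).re / 4) := by
    rw [Complex.norm_exp]
    congr 1
    have : -(w ^ 2) / 4 = (((1:ℝ)/4 : ℝ) : ℂ) * (-(w ^ 2)) := by push_cast; ring
    rw [this, Complex.re_ofReal_mul, Complex.neg_re]
    ring
  rw [hermitePhi, norm_mul, hexp, hermiteP, norm_div, Complex.norm_real, Real.norm_eq_abs]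
  have hcs : |(2 * π) ^ ((1:ℝ)/4) * Real.sqrt (Nat.factorial k)| =
      (2 * π) ^ ((1:ℝ)/4) * Real.sqrt (Nat.factorial k) := by
    rw [abs_of_nonneg]; positivity
  rw [hcs]
  have h1 : ‖hermiteH k w‖ / ((2 * π) ^ ((1:ℝ)/4) * Real.sqrt (Nat.factorial k)) ≤
      ‖hermiteH k w‖ / Real.sqrt (Nat.factorial k) := by
    apply div_le_div_of_nonneg_left (norm_nonneg _) hsq
    nlinarith [hsq, hc]
  have h2 : ‖hermiteH k w‖ / Real.sqrt (Nat.factorial k) ≤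
      Real.sqrt k.factorial * ρ⁻¹ ^ k * (Real.exp (ρ ^ 2 / 2) * Real.exp (ρ * ‖w‖)) := by
    rw [div_le_iff₀ hsq]
    calc ‖hermiteH k w‖
        ≤ k.factorial * ρ⁻¹ ^ k * Real.exp (ρ ^ 2 / 2) * Real.exp (ρ * ‖w‖) :=
          abs_hermiteH_le k w hρ
      _ = Real.sqrt k.factorial * ρ⁻¹ ^ k * (Real.exp (ρ ^ 2 / 2) * Real.exp (ρ * ‖w‖)) *
            Real.sqrt k.factorial := by
          have hs : Real.sqrt k.factorial * Real.sqrt k.factorial = (k.factorial:ℝ) :=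
            Real.mul_self_sqrt (by positivity)
          linear_combination (ρ⁻¹ ^ k * Real.exp (ρ ^ 2 / 2) * Real.exp (ρ * ‖w‖)) *
            hs.symm
  calc ‖hermiteH k w‖ / ((2 * π) ^ ((1:ℝ)/4) * Real.sqrt (Nat.factorial k)) *
        Real.exp (-(w ^ 2).re / 4)
      ≤ (Real.sqrt k.factorial * ρ⁻¹ ^ k *
          (Real.exp (ρ ^ 2 / 2) * Real.exp (ρ * ‖w‖))) *
        Real.exp (-(w ^ 2).re / 4) := by
        apply mul_le_mul_of_nonneg_right (h1.trans h2) (Real.exp_nonneg _)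
    _ = Real.sqrt k.factorial * ρ⁻¹ ^ k *
        (Real.exp (ρ ^ 2 / 2) * Real.exp (ρ * ‖w‖) * Real.exp (-(w ^ 2).re / 4)) := by
        ring

lemma cpow_aux (N : ℕ) (hN : 0 < N) : ((N:ℂ)⁻¹) ^ (-(1:ℂ)/2) = ((Real.sqrt N : ℝ) : ℂ) := by
  have h0 : (0:ℝ) < N := by exact_mod_cast hN
  have h1 : ((N:ℂ)⁻¹) = (((N:ℝ)⁻¹ : ℝ) : ℂ) := by push_cast; ring
  have h2 : (-(1:ℂ)/2) = ((-(1/2) : ℝ) : ℂ) := by norm_num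
  rw [h1, h2, ← Complex.ofReal_cpow (by positivity)]
  rw [Complex.ofReal_inj]
  rw [Real.inv_rpow h0.le, Real.rpow_neg h0.le, inv_inv, Real.sqrt_eq_rpow]

lemma core_ineq (δ x y q az : ℝ) (hδ : 0 < δ) (hy : δ ≤ y) (hxy : y ≤ x)
    (hq1 : 1 ≤ q) (hδq : 1 ≤ δ * q) (haz : az ≤ x + y) :
    (δ/(2*y))^2/2 + (δ/(2*y)) * (az * q) - (x^2 - y^2) * q^2 / 4 ≤ 1 + δ * q^2 := by
  have hy0 : 0 < y := lt_of_lt_of_le hδ hy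
  have hq0 : 0 ≤ q := le_trans zero_le_one hq1
  have e1 : δ/(2*y) ≤ 1/2 := by rw [div_le_iff₀ (by linarith)]; linarith
  have e1' : (δ/(2*y))^2/2 ≤ 1/8 := by
    nlinarith [e1, div_nonneg hδ.le (by linarith : (0:ℝ) ≤ 2*y)]
  have e2 : (δ/(2*y)) * (az * q) ≤ (δ/(2*y)) * ((x+y) * q) := by
    gcongr
  have hd : δ * q ≤ y^2 * q^2 := by
    nlinarith [mul_nonneg (mul_nonneg hδ.le hq0) (sub_nonneg.mpr hδq),
      mul_nonneg (by nlinarith : (0:ℝ) ≤ y^2 - δ^2) (sq_nonneg q)]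
  have e3 : (δ/(2*y)) * ((x+y) * q) - (x^2 - y^2) * q^2 / 4 ≤ δ * q^2 := by
    rw [div_mul_eq_mul_div, sub_le_iff_le_add, div_le_iff₀ (by linarith : (0:ℝ) < 2*y)]
    have h_a : 0 ≤ 2*y*δ*q*(q-1) := by
      apply mul_nonneg
      apply mul_nonneg
      apply mul_nonneg
      all_goals nlinarith
    have h_b : 0 ≤ y*(x-y)^2*q^2/2 := by positivity
    have h_c : 0 ≤ (x-y)*(y^2*q^2 - δ*q) :=
      mul_nonneg (by linarith) (by linarith)
    nlinarith [h_a, h_b, h_c]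
  linarith

lemma point_bound (δ : ℝ) (hδ : 0 < δ) (z : ℂ) (N : ℕ)
    (hy : δ ≤ |z.im|) (hxy : |z.im| ≤ |z.re|) (hN : δ⁻¹ ^ 2 ≤ (N:ℝ)) {k : ℕ} (hk : k < N) :
    ‖hermitePhi k (z * ((Real.sqrt N : ℝ) : ℂ))‖ ≤
      Real.sqrt k.factorial * (2 * |z.im| / δ) ^ N * Real.exp (1 + δ * N) := by
  have hy0 : 0 < |z.im| := lt_of_lt_of_le hδ hy
  have hN0R : (0:ℝ) < N := lt_of_lt_of_le (by positivity) hN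
  have hN1 : (1:ℝ) ≤ (N:ℝ) := by
    have hN0 : 0 < N := by exact_mod_cast hN0R
    exact_mod_cast hN0
  set q := Real.sqrt N with hqdef
  have hq0 : 0 ≤ q := Real.sqrt_nonneg _
  have hq2 : q^2 = N := Real.sq_sqrt hN0R.le
  have hq1 : 1 ≤ q := by
    rw [hqdef, show (1:ℝ) = Real.sqrt 1 from (Real.sqrt_one).symm]
    exact Real.sqrt_le_sqrt hN1
  have hδq : 1 ≤ δ * q := by
    have hinv : δ⁻¹ ≤ q := by
      rw [hqdef, show δ⁻¹ = Real.sqrt (δ⁻¹^2) from (Real.sqrt_sq (by positivity)).symm]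
      exact Real.sqrt_le_sqrt hN
    calc (1:ℝ) = δ * δ⁻¹ := by field_simp
      _ ≤ δ * q := by gcongr
  set ρ := δ / (2 * |z.im|) with hρdef
  have hρ : 0 < ρ := by positivity
  refine le_trans (abs_hermitePhi_le k _ hρ) ?_
  have habsw : ‖z * ((q:ℝ):ℂ)‖ = ‖z‖ * q := by
    rw [norm_mul, Complex.norm_real, Real.norm_eq_abs, abs_of_nonneg hq0]
  have hre : (((z * ((q:ℝ):ℂ))) ^ 2).re = (z.re^2 - z.im^2) * q^2 := by
    have h : (z * ((q:ℝ):ℂ))^2 = (((q^2 : ℝ)):ℂ) * z^2 := by push_cast; ring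
    rw [h, Complex.re_ofReal_mul]
    have h2 : (z^2).re = z.re^2 - z.im^2 := by rw [sq, Complex.mul_re]; ring
    rw [h2]; ring
  have hpow : ρ⁻¹^k ≤ (2*|z.im|/δ)^N := by
    rw [hρdef, inv_div]
    have hb : (1:ℝ) ≤ 2*|z.im|/δ := by rw [le_div_iff₀ hδ]; linarith
    exact pow_le_pow_right₀ hb hk.le
  have hexp : Real.exp (ρ^2/2) * Real.exp (ρ * ‖z*((q:ℝ):ℂ)‖) *
      Real.exp (-(((z*((q:ℝ):ℂ)))^2).re/4) ≤ Real.exp (1 + δ*N) := by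
    rw [← Real.exp_add, ← Real.exp_add, Real.exp_le_exp, habsw, hre, ← hq2]
    have hz : ‖z‖ ≤ |z.re| + |z.im| := Complex.norm_le_abs_re_add_abs_im z
    have hx2 : z.re^2 = |z.re|^2 := (sq_abs _).symm
    have hy2 : z.im^2 = |z.im|^2 := (sq_abs _).symm
    rw [hρdef, hx2, hy2]
    have := core_ineq δ |z.re| |z.im| q (‖z‖) hδ hy hxy hq1 hδq hz
    linarith
  calc Real.sqrt k.factorial * ρ⁻¹ ^ k *
        (Real.exp (ρ ^ 2 / 2) * Real.exp (ρ * ‖z*((q:ℝ):ℂ)‖) *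
          Real.exp (-((z*((q:ℝ):ℂ)) ^ 2).re / 4))
      ≤ Real.sqrt k.factorial * (2*|z.im|/δ)^N * Real.exp (1 + δ*N) := by
        apply mul_le_mul (mul_le_mul_of_nonneg_left hpow (Real.sqrt_nonneg _)) hexp
          (by positivity) (by positivity)

theorem kernel_bound_far :
    ∀ δ : ℝ, 0 < δ → ∃ C : ℝ, 0 < C ∧ ∃ R : ℝ, 0 < R ∧
      ∀ z₁ z₂ : ℂ, δ ≤ |z₁.im| → δ ≤ |z₂.im| → |z₁.im| ≤ |z₁.re| → |z₂.im| ≤ |z₂.re| →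
        ∀ N : ℕ, δ⁻¹ ^ 2 ≤ (N : ℝ) →
          ‖(N : ℂ)⁻¹ * kernelKt N z₁ z₂ ((N : ℂ)⁻¹)‖ ≤
            C * (Nat.factorial (N - 1)) * R ^ (2 * N) * |z₁.im| ^ N * |z₂.im| ^ N := by
  intro δ hδ
  refine ⟨Real.exp 2, Real.exp_pos 2, 4 * Real.exp δ / δ, by positivity, ?_⟩
  intro z₁ z₂ h1 h2 hr1 hr2 N hN
  have hN0R : (0:ℝ) < N := lt_of_lt_of_le (by positivity) hN
  have hN0 : 0 < N := by exact_mod_cast hN0R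
  have hy₁ : 0 < |z₁.im| := lt_of_lt_of_le hδ h1
  have hy₂ : 0 < |z₂.im| := lt_of_lt_of_le hδ h2
  rw [kernelKt, cpow_aux N hN0]
  set q := Real.sqrt N with hqdef
  have hq0 : 0 ≤ q := Real.sqrt_nonneg _
  have hq2 : q^2 = N := Real.sq_sqrt hN0R.le
  set w₁ := z₁ * ((q:ℝ):ℂ) with hw₁
  set w₂ := z₂ * ((q:ℝ):ℂ) with hw₂
  rw [norm_mul, norm_mul, norm_inv, Complex.norm_natCast, Complex.norm_real, Real.norm_eq_abs, abs_of_nonneg hq0]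
  have hN1 : (1:ℝ) ≤ (N:ℝ) := by exact_mod_cast hN0
  have hqN : q ≤ (N:ℝ) := by nlinarith [hq2, hq0, hN1, sq_nonneg (q-1)]
  have hfac : (N:ℝ)⁻¹ * q ≤ 1 := by
    rw [← div_eq_inv_mul]
    exact (div_le_one hN0R).mpr hqN
  -- the sum bound
  have hterm : ∀ k ∈ Finset.range N,
      ‖hermitePhi k w₁ * hermitePhi k w₂‖ ≤
        ((N-1).factorial : ℝ) * ((2*|z₁.im|/δ)^N * (2*|z₂.im|/δ)^N) *
          (Real.exp (1 + δ*N) * Real.exp (1 + δ*N)) := by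
    intro k hk
    have hk' := Finset.mem_range.mp hk
    have b1 := point_bound δ hδ z₁ N h1 hr1 hN hk'
    have b2 := point_bound δ hδ z₂ N h2 hr2 hN hk'
    rw [norm_mul]
    have hs : Real.sqrt k.factorial * Real.sqrt k.factorial = (k.factorial:ℝ) :=
      Real.mul_self_sqrt (by positivity)
    have hkN : (k.factorial : ℝ) ≤ ((N-1).factorial : ℝ) := by
      exact_mod_cast Nat.factorial_le (by omega)
    calc ‖hermitePhi k w₁‖ * ‖hermitePhi k w₂‖
        ≤ (Real.sqrt k.factorial * (2*|z₁.im|/δ)^N * Real.exp (1 + δ*N)) *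
          (Real.sqrt k.factorial * (2*|z₂.im|/δ)^N * Real.exp (1 + δ*N)) :=
          mul_le_mul b1 b2 (norm_nonneg _) (by positivity)
      _ = (k.factorial:ℝ) * ((2*|z₁.im|/δ)^N * (2*|z₂.im|/δ)^N) *
            (Real.exp (1 + δ*N) * Real.exp (1 + δ*N)) := by
          linear_combination ((2*|z₁.im|/δ)^N * (2*|z₂.im|/δ)^N *
            (Real.exp (1 + δ*N) * Real.exp (1 + δ*N))) * hs
      _ ≤ ((N-1).factorial : ℝ) * ((2*|z₁.im|/δ)^N * (2*|z₂.im|/δ)^N) *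
            (Real.exp (1 + δ*N) * Real.exp (1 + δ*N)) := by
          apply mul_le_mul_of_nonneg_right (mul_le_mul_of_nonneg_right hkN (by positivity))
            (by positivity)
  have hsum : ‖kernelK N w₁ w₂‖ ≤
      (N:ℝ) * (((N-1).factorial : ℝ) * ((2*|z₁.im|/δ)^N * (2*|z₂.im|/δ)^N) *
        (Real.exp (1 + δ*N) * Real.exp (1 + δ*N))) := by
    rw [kernelK]
    refine le_trans (norm_sum_le _ _) ?_
    refine le_trans (Finset.sum_le_sum hterm) ?_
    rw [Finset.sum_const, Finset.card_range, nsmul_eq_mul]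
  -- final numeric bound
  set y₁ := |z₁.im|
  set y₂ := |z₂.im|
  have hexp2 : Real.exp (1+δ*N) * Real.exp (1+δ*N) = Real.exp 2 * ((Real.exp δ)^2)^N := by
    rw [← pow_mul, ← Real.exp_nat_mul, ← Real.exp_add, ← Real.exp_add]
    congr 1
    push_cast
    ring
  have hN4 : (N:ℝ) ≤ 4^N := by
    calc (N:ℝ) ≤ 2^N := by exact_mod_cast (Nat.lt_two_pow_self (n := N)).le
      _ ≤ 4^N := by gcongr <;> norm_num
  set u := (2*y₁/δ) * (2*y₂/δ) * (Real.exp δ)^2 with hu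
  have hu0 : 0 ≤ u := by positivity
  have hfinal : (N:ℝ) * (((N-1).factorial : ℝ) * ((2*y₁/δ)^N * (2*y₂/δ)^N) *
      (Real.exp (1 + δ*N) * Real.exp (1 + δ*N))) ≤
      Real.exp 2 * ((N-1).factorial : ℝ) * (4*Real.exp δ/δ)^(2*N) * y₁^N * y₂^N := by
    have hupow : u^N = (2*y₁/δ)^N * (2*y₂/δ)^N * ((Real.exp δ)^2)^N := by
      rw [hu, mul_pow, mul_pow]
    have hvu : ((4*Real.exp δ/δ)^2) * y₁ * y₂ = 4 * u := by
      rw [hu]; field_simp; ring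
    calc (N:ℝ) * (((N-1).factorial : ℝ) * ((2*y₁/δ)^N * (2*y₂/δ)^N) *
        (Real.exp (1 + δ*N) * Real.exp (1 + δ*N)))
        = (Real.exp 2 * ((N-1).factorial : ℝ)) * ((N:ℝ) * u^N) := by
          rw [hexp2, hupow]; ring
      _ ≤ (Real.exp 2 * ((N-1).factorial : ℝ)) * (4^N * u^N) := by
          apply mul_le_mul_of_nonneg_left
            (mul_le_mul_of_nonneg_right hN4 (by positivity)) (by positivity)
      _ = Real.exp 2 * ((N-1).factorial : ℝ) * (4*Real.exp δ/δ)^(2*N) * y₁^N * y₂^N := by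
          have hrhs : ((4*Real.exp δ/δ)^(2*N)) * (y₁^N * y₂^N) = 4^N * u^N := by
            calc ((4*Real.exp δ/δ)^(2*N)) * (y₁^N * y₂^N)
                = (((4*Real.exp δ/δ)^2) * (y₁*y₂))^N := by
                  rw [pow_mul, ← mul_pow, ← mul_pow]
              _ = (4*u)^N := by
                  rw [show ((4*Real.exp δ/δ)^2) * (y₁*y₂) = 4*u by linear_combination hvu]
              _ = 4^N * u^N := mul_pow _ _ _
          linear_combination (Real.exp 2 * ((N-1).factorial : ℝ)) * hrhs.symm
  calc (N:ℝ)⁻¹ * (q * ‖kernelK N w₁ w₂‖)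
      = ((N:ℝ)⁻¹ * q) * ‖kernelK N w₁ w₂‖ := by ring
    _ ≤ 1 * ‖kernelK N w₁ w₂‖ :=
        mul_le_mul_of_nonneg_right hfac (norm_nonneg _)
    _ = ‖kernelK N w₁ w₂‖ := one_mul _
    _ ≤ (N:ℝ) * (((N-1).factorial : ℝ) * ((2*y₁/δ)^N * (2*y₂/δ)^N) *
        (Real.exp (1 + δ*N) * Real.exp (1 + δ*N))) := hsum
    _ ≤ Real.exp 2 * ((N-1).factorial : ℝ) * (4*Real.exp δ/δ)^(2*N) * y₁^N * y₂^N := hfinal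

end
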